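/- In every valid plan π^λ of the compiled model M^λ, for each fluent f_i ∈ F^R exactly one check action from the set {a^1_{f_i}, a^2_{f_i}, a^3_{f_i}, a^4_{f_i}} occurs, so |κ⁺(π^λ)| + |κ⁻(π^λ)| = |F^R|; moreover, the number of check disagreement actions equals the symmetric difference of the final goal states reached in the two copies: |κ⁻(π^λ)| = |s^H Δ s^R|, where s^H is the state of the human-copy fluents and s^R the state of the robot fluents at the moment the check phase begins (equivalently, |κ⁻(π^λ)| = |GSD(H(π^λ), M^H, R(π^λ), M^R)|). -/
import Mathlib


/-- A STRIPS-style action over fluent type `F`: positive/negative preconditions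
and add/delete effects. -/
structure Act (F : Type) where
  prePos : Finset F
  preNeg : Finset F
  addE : Finset F
  delE : Finset F
deriving DecidableEq

/-- A planning model `M = ⟨F, A, c, I, G⟩`. -/
structure PModel (F : Type) [DecidableEq F] where
  fluents : Finset F
  actions : Finset (Act F)
  cost : Act F → ℕ
  init : Finset F
  goal : Finset F

variable {F : Type} [DecidableEq F]

/-- Action `a` is executable in state `s`. -/
def execAct (s : Finset F) (a : Act F) : Prop :=
  a.prePos ⊆ s ∧ a.preNeg ∩ s = ∅

/-- Transition of one action. -/
def stepAct (s : Finset F) (a : Act F) : Finset F :=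
  (s ∪ a.addE) \ a.delE

/-- Transition extended to action sequences. -/
def runSeq (s : Finset F) : List (Act F) → Finset F
  | [] => s
  | a :: π => runSeq (stepAct s a) π

/-- The action sequence is executable in order from state `s`, using actions of `M`. -/
def ExecFrom (M : PModel F) : Finset F → List (Act F) → Prop
  | _, [] => True
  | s, a :: π => a ∈ M.actions ∧ execAct s a ∧ ExecFrom M (stepAct s a) π

/-- A plan for `M`: executable from the initial state and achieving the goal. -/
def IsPlan (M : PModel F) (π : List (Act F)) : Prop :=
  ExecFrom M M.init π ∧ M.goal ⊆ runSeq M.init π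

/-- Cost of a plan. -/
def planCost (M : PModel F) (π : List (Act F)) : ℕ :=
  (π.map M.cost).sum

/-- Cost-optimal plan. -/
def IsOptimal (M : PModel F) (π : List (Act F)) : Prop :=
  IsPlan M π ∧ ∀ π', IsPlan M π' → planCost M π ≤ planCost M π'

/-- Goal state divergence of plans `π1` of `M1` and `π2` of `M2`:
the symmetric difference of the two final states. -/
def GSD (M1 M2 : PModel F) (π1 π2 : List (Act F)) : Finset F :=
  (runSeq M1.init π1 \ runSeq M2.init π2) ∪ (runSeq M2.init π2 \ runSeq M1.init π1)

/-- All achievable values `|GSD(π1, M1, π2, M2)|` over pairs of valid plans. -/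
def gsdVals (M1 M2 : PModel F) : Set ℕ :=
  { n | ∃ π1 π2, IsPlan M1 π1 ∧ IsPlan M2 π2 ∧ n = (GSD M1 M2 π1 π2).card }

/-- Maximal (worst-case) goal state divergence `GD↑(M1, M2)`. -/
noncomputable def GDup (M1 M2 : PModel F) : ℕ := sSup (gsdVals M1 M2)

/-- Minimal (best-case) goal state divergence `GD↓(M1, M2)`. -/
noncomputable def GDdown (M1 M2 : PModel F) : ℕ := sInf (gsdVals M1 M2)

/-- Fluents of the compiled model `M^λ`: the robot copy `F^R`, the disjoint human copy
`F^H`, the housekeeping fluents `robot_can_act`/`human_can_act`, and one compare fluent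
`f^κ` per original fluent. -/
inductive LF (F : Type) where
  | robot : F → LF F
  | human : F → LF F
  | robotCanAct : LF F
  | humanCanAct : LF F
  | compare : F → LF F
deriving DecidableEq

variable {F : Type} [DecidableEq F] in
/-- A robot action of `M^R` lifted into the compiled model: expressed in the robot copy of
the fluents, with `robot_can_act` added as a positive precondition. -/
def liftR (a : Act F) : Act (LF F) where
  prePos := a.prePos.image LF.robot ∪ {LF.robotCanAct}
  preNeg := a.preNeg.image LF.robot
  addE := a.addE.image LF.robot
  delE := a.delE.image LF.robot

variable {F : Type} [DecidableEq F] in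
/-- A human action of `M^H` lifted into the compiled model: expressed in the human copy of
the fluents, with `human_can_act` added as a positive precondition. -/
def liftH (a : Act F) : Act (LF F) where
  prePos := a.prePos.image LF.human ∪ {LF.humanCanAct}
  preNeg := a.preNeg.image LF.human
  addE := a.addE.image LF.human
  delE := a.delE.image LF.human

variable {F : Type} [DecidableEq F] in
/-- The human flip action: requires the human copy of the goal and `human_can_act`;
deletes `human_can_act` and adds `robot_can_act`. -/
def flipH (MH : PModel F) : Act (LF F) where
  prePos := MH.goal.image LF.human ∪ {LF.humanCanAct}
  preNeg := ∅
  addE := {LF.robotCanAct}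
  delE := {LF.humanCanAct}

variable {F : Type} [DecidableEq F] in
/-- The robot flip action: requires the robot goal and `robot_can_act`;
deletes `robot_can_act`. -/
def flipR (MR : PModel F) : Act (LF F) where
  prePos := MR.goal.image LF.robot ∪ {LF.robotCanAct}
  preNeg := ∅
  addE := ∅
  delE := {LF.robotCanAct}

variable {F : Type} [DecidableEq F] in
/-- Check disagreement action `a^1_{f}`: fires when `f` holds for the robot but not in the
human copy; adds the compare fluent `f^κ`. -/
def chk1 (f : F) : Act (LF F) where
  prePos := {LF.robot f}
  preNeg := {LF.human f, LF.robotCanAct, LF.humanCanAct, LF.compare f}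
  addE := {LF.compare f}
  delE := ∅

variable {F : Type} [DecidableEq F] in
/-- Check disagreement action `a^2_{f}`: fires when `f` holds in the human copy but not
for the robot; adds the compare fluent `f^κ`. -/
def chk2 (f : F) : Act (LF F) where
  prePos := {LF.human f}
  preNeg := {LF.robot f, LF.robotCanAct, LF.humanCanAct, LF.compare f}
  addE := {LF.compare f}
  delE := ∅

variable {F : Type} [DecidableEq F] in
/-- Check agreement action `a^3_{f}`: fires when `f` holds in both copies; adds `f^κ`. -/
def chk3 (f : F) : Act (LF F) where
  prePos := {LF.robot f, LF.human f}
  preNeg := {LF.robotCanAct, LF.humanCanAct, LF.compare f}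
  addE := {LF.compare f}
  delE := ∅

variable {F : Type} [DecidableEq F] in
/-- Check agreement action `a^4_{f}`: fires when `f` holds in neither copy; adds `f^κ`. -/
def chk4 (f : F) : Act (LF F) where
  prePos := ∅
  preNeg := {LF.robot f, LF.human f, LF.robotCanAct, LF.humanCanAct, LF.compare f}
  addE := {LF.compare f}
  delE := ∅

variable {F : Type} [DecidableEq F] in
/-- The compiled model `M^λ` for the pair `⟨M^R, M^H⟩` (sharing fluent set `F = F^R`),
with cost function `c`: lifted robot and human actions, the two flip actions, and the four
check actions per fluent; initial state `I^R ∪ I^H ∪ {human_can_act}`; goal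
`G^R ∪ G^H ∪ F^κ`. -/
def compiled (MR MH : PModel F) (c : Act (LF F) → ℕ) : PModel (LF F) where
  fluents := MR.fluents.image LF.robot ∪ MR.fluents.image LF.human ∪
    {LF.robotCanAct, LF.humanCanAct} ∪ MR.fluents.image LF.compare
  actions := MR.actions.image liftR ∪ MH.actions.image liftH ∪
    {flipH MH, flipR MR} ∪ MR.fluents.image chk1 ∪ MR.fluents.image chk2 ∪
    MR.fluents.image chk3 ∪ MR.fluents.image chk4
  cost := c
  init := MR.init.image LF.robot ∪ MH.init.image LF.human ∪ {LF.humanCanAct}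
  goal := MR.goal.image LF.robot ∪ MH.goal.image LF.human ∪ MR.fluents.image LF.compare

variable {F : Type} [DecidableEq F] in
/-- `H(π^λ)`: the subsequence of human-copy actions appearing in `π^λ`. -/
def humanPart (MH : PModel F) (π : List (Act (LF F))) : List (Act (LF F)) :=
  π.filter (fun a => decide (a ∈ MH.actions.image liftH))

variable {F : Type} [DecidableEq F] in
/-- `R(π^λ)`: the subsequence of robot actions appearing in `π^λ`. -/
def robotPart (MR : PModel F) (π : List (Act (LF F))) : List (Act (LF F)) :=
  π.filter (fun a => decide (a ∈ MR.actions.image liftR))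

variable {F : Type} [DecidableEq F] in
/-- `|κ⁻(π^λ)|`: the number of check disagreement actions occurring in `π^λ`. -/
def disCount (MR : PModel F) (π : List (Act (LF F))) : ℕ :=
  π.countP (fun a => decide (∃ f ∈ MR.fluents, a = chk1 f ∨ a = chk2 f))

variable {F : Type} [DecidableEq F] in
/-- `|κ⁺(π^λ)|`: the number of check agreement actions occurring in `π^λ`. -/
def agrCount (MR : PModel F) (π : List (Act (LF F))) : ℕ :=
  π.countP (fun a => decide (∃ f ∈ MR.fluents, a = chk3 f ∨ a = chk4 f))

variable {F : Type} [DecidableEq F] in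
/-- A well-formed planning model: initial state, goal, and all action components are
contained in the fluent set. -/
def WellFormed (M : PModel F) : Prop :=
  M.init ⊆ M.fluents ∧ M.goal ⊆ M.fluents ∧
  ∀ a ∈ M.actions,
    a.prePos ⊆ M.fluents ∧ a.preNeg ⊆ M.fluents ∧
    a.addE ⊆ M.fluents ∧ a.delE ⊆ M.fluents


section CheckHelpers
variable {F : Type} [DecidableEq F]

/-- Canonical shape of states of the compiled model. -/
def mkS (sR sH : Finset F) (hq rq : Bool) (K : Finset F) : Finset (LF F) :=
  sR.image LF.robot ∪ sH.image LF.human ∪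
    (if rq then {LF.robotCanAct} else ∅) ∪ (if hq then {LF.humanCanAct} else ∅) ∪
    K.image LF.compare

@[simp] lemma mem_mkS_robot {sR sH K : Finset F} {hq rq : Bool} {f : F} :
    LF.robot f ∈ mkS sR sH hq rq K ↔ f ∈ sR := by
  unfold mkS; cases hq <;> cases rq <;> simp

@[simp] lemma mem_mkS_human {sR sH K : Finset F} {hq rq : Bool} {f : F} :
    LF.human f ∈ mkS sR sH hq rq K ↔ f ∈ sH := by
  unfold mkS; cases hq <;> cases rq <;> simp

@[simp] lemma mem_mkS_rca {sR sH K : Finset F} {hq rq : Bool} :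
    LF.robotCanAct ∈ mkS sR sH hq rq K ↔ rq = true := by
  unfold mkS; cases hq <;> cases rq <;> simp

@[simp] lemma mem_mkS_hca {sR sH K : Finset F} {hq rq : Bool} :
    LF.humanCanAct ∈ mkS sR sH hq rq K ↔ hq = true := by
  unfold mkS; cases hq <;> cases rq <;> simp

@[simp] lemma mem_mkS_cmp {sR sH K : Finset F} {hq rq : Bool} {f : F} :
    LF.compare f ∈ mkS sR sH hq rq K ↔ f ∈ K := by
  unfold mkS; cases hq <;> cases rq <;> simp

/- Step lemmas -/

lemma step_liftH (b : Act F) (sR sH K : Finset F) (hq rq : Bool) :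
    stepAct (mkS sR sH hq rq K) (liftH b) = mkS sR (stepAct sH b) hq rq K := by
  ext x; cases x <;> simp [stepAct, liftH] <;> tauto

lemma step_liftR (b : Act F) (sR sH K : Finset F) (hq rq : Bool) :
    stepAct (mkS sR sH hq rq K) (liftR b) = mkS (stepAct sR b) sH hq rq K := by
  ext x; cases x <;> simp [stepAct, liftR] <;> tauto

lemma step_flipH (MH : PModel F) (sR sH K : Finset F) (hq rq : Bool) :
    stepAct (mkS sR sH hq rq K) (flipH MH) = mkS sR sH false true K := by
  ext x; cases x <;> simp [stepAct, flipH] <;> tauto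

lemma step_flipR (MR : PModel F) (sR sH K : Finset F) (hq rq : Bool) :
    stepAct (mkS sR sH hq rq K) (flipR MR) = mkS sR sH hq false K := by
  ext x; cases x <;> simp [stepAct, flipR] <;> tauto

lemma step_chk1 (f : F) (sR sH K : Finset F) (hq rq : Bool) :
    stepAct (mkS sR sH hq rq K) (chk1 f) = mkS sR sH hq rq (insert f K) := by
  ext x; cases x <;> simp [stepAct, chk1] <;> tauto

lemma step_chk2 (f : F) (sR sH K : Finset F) (hq rq : Bool) :
    stepAct (mkS sR sH hq rq K) (chk2 f) = mkS sR sH hq rq (insert f K) := by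
  ext x; cases x <;> simp [stepAct, chk2] <;> tauto

lemma step_chk3 (f : F) (sR sH K : Finset F) (hq rq : Bool) :
    stepAct (mkS sR sH hq rq K) (chk3 f) = mkS sR sH hq rq (insert f K) := by
  ext x; cases x <;> simp [stepAct, chk3] <;> tauto

lemma step_chk4 (f : F) (sR sH K : Finset F) (hq rq : Bool) :
    stepAct (mkS sR sH hq rq K) (chk4 f) = mkS sR sH hq rq (insert f K) := by
  ext x; cases x <;> simp [stepAct, chk4] <;> tauto

/- Executability decodes -/

lemma exec_liftH {b : Act F} {sR sH K : Finset F} {hq rq : Bool}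
    (h : execAct (mkS sR sH hq rq K) (liftH b)) : hq = true ∧ execAct sH b := by
  obtain ⟨h1, h2⟩ := h
  refine ⟨?_, ?_, ?_⟩
  · simpa using h1 (show LF.humanCanAct ∈ (liftH b).prePos by simp [liftH])
  · intro f hf
    simpa using h1 (show LF.human f ∈ (liftH b).prePos from
      Finset.mem_union_left _ (Finset.mem_image_of_mem LF.human hf))
  · rw [Finset.eq_empty_iff_forall_notMem] at h2 ⊢
    intro f hf
    rw [Finset.mem_inter] at hf
    exact h2 (LF.human f) (Finset.mem_inter.2
      ⟨show LF.human f ∈ (liftH b).preNeg from Finset.mem_image_of_mem LF.human hf.1,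
       mem_mkS_human.2 hf.2⟩)

lemma exec_liftR {b : Act F} {sR sH K : Finset F} {hq rq : Bool}
    (h : execAct (mkS sR sH hq rq K) (liftR b)) : rq = true ∧ execAct sR b := by
  obtain ⟨h1, h2⟩ := h
  refine ⟨?_, ?_, ?_⟩
  · simpa using h1 (show LF.robotCanAct ∈ (liftR b).prePos by simp [liftR])
  · intro f hf
    simpa using h1 (show LF.robot f ∈ (liftR b).prePos from
      Finset.mem_union_left _ (Finset.mem_image_of_mem LF.robot hf))
  · rw [Finset.eq_empty_iff_forall_notMem] at h2 ⊢
    intro f hf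
    rw [Finset.mem_inter] at hf
    exact h2 (LF.robot f) (Finset.mem_inter.2
      ⟨show LF.robot f ∈ (liftR b).preNeg from Finset.mem_image_of_mem LF.robot hf.1,
       mem_mkS_robot.2 hf.2⟩)

lemma exec_flipH {MH : PModel F} {sR sH K : Finset F} {hq rq : Bool}
    (h : execAct (mkS sR sH hq rq K) (flipH MH)) : hq = true := by
  simpa using h.1 (show LF.humanCanAct ∈ (flipH MH).prePos by simp [flipH])

lemma exec_flipR {MR : PModel F} {sR sH K : Finset F} {hq rq : Bool}
    (h : execAct (mkS sR sH hq rq K) (flipR MR)) : rq = true := by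
  simpa using h.1 (show LF.robotCanAct ∈ (flipR MR).prePos by simp [flipR])

lemma preNeg_not_mem {s : Finset (LF F)} {a : Act (LF F)} (h : a.preNeg ∩ s = ∅) :
    ∀ x ∈ a.preNeg, x ∉ s := by
  intro x hx hx'
  exact (Finset.eq_empty_iff_forall_notMem.1 h) x (Finset.mem_inter.2 ⟨hx, hx'⟩)

lemma exec_chk1 {f : F} {sR sH K : Finset F} {hq rq : Bool}
    (h : execAct (mkS sR sH hq rq K) (chk1 f)) :
    f ∈ sR ∧ f ∉ sH ∧ hq = false ∧ rq = false ∧ f ∉ K := by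
  have hN := preNeg_not_mem h.2
  exact ⟨by simpa using h.1 (show LF.robot f ∈ (chk1 f).prePos by simp [chk1]),
    by simpa using hN (LF.human f) (by simp [chk1]),
    by simpa using hN LF.humanCanAct (by simp [chk1]),
    by simpa using hN LF.robotCanAct (by simp [chk1]),
    by simpa using hN (LF.compare f) (by simp [chk1])⟩

lemma exec_chk2 {f : F} {sR sH K : Finset F} {hq rq : Bool}
    (h : execAct (mkS sR sH hq rq K) (chk2 f)) :
    f ∉ sR ∧ f ∈ sH ∧ hq = false ∧ rq = false ∧ f ∉ K := by
  have hN := preNeg_not_mem h.2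
  exact ⟨by simpa using hN (LF.robot f) (by simp [chk2]),
    by simpa using h.1 (show LF.human f ∈ (chk2 f).prePos by simp [chk2]),
    by simpa using hN LF.humanCanAct (by simp [chk2]),
    by simpa using hN LF.robotCanAct (by simp [chk2]),
    by simpa using hN (LF.compare f) (by simp [chk2])⟩

lemma exec_chk3 {f : F} {sR sH K : Finset F} {hq rq : Bool}
    (h : execAct (mkS sR sH hq rq K) (chk3 f)) :
    f ∈ sR ∧ f ∈ sH ∧ hq = false ∧ rq = false ∧ f ∉ K := by
  have hN := preNeg_not_mem h.2
  exact ⟨by simpa using h.1 (show LF.robot f ∈ (chk3 f).prePos by simp [chk3]),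
    by simpa using h.1 (show LF.human f ∈ (chk3 f).prePos by simp [chk3]),
    by simpa using hN LF.humanCanAct (by simp [chk3]),
    by simpa using hN LF.robotCanAct (by simp [chk3]),
    by simpa using hN (LF.compare f) (by simp [chk3])⟩

lemma exec_chk4 {f : F} {sR sH K : Finset F} {hq rq : Bool}
    (h : execAct (mkS sR sH hq rq K) (chk4 f)) :
    f ∉ sR ∧ f ∉ sH ∧ hq = false ∧ rq = false ∧ f ∉ K := by
  have hN := preNeg_not_mem h.2
  exact ⟨by simpa using hN (LF.robot f) (by simp [chk4]),
    by simpa using hN (LF.human f) (by simp [chk4]),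
    by simpa using hN LF.humanCanAct (by simp [chk4]),
    by simpa using hN LF.robotCanAct (by simp [chk4]),
    by simpa using hN (LF.compare f) (by simp [chk4])⟩

/- Disjointness of action classes -/

lemma liftR_ne_liftH (b b' : Act F) : liftR b ≠ liftH b' := by
  intro h
  have h1 : LF.robotCanAct ∈ (liftR b).prePos := by simp [liftR]
  rw [h] at h1; simp [liftH] at h1

lemma liftH_ne_flipH (b : Act F) (MH : PModel F) : liftH b ≠ flipH MH := by
  intro h
  have h1 : LF.robotCanAct ∈ (flipH MH).addE := by simp [flipH]
  rw [← h] at h1; simp [liftH] at h1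

lemma liftR_ne_flipH (b : Act F) (MH : PModel F) : liftR b ≠ flipH MH := by
  intro h
  have h1 : LF.robotCanAct ∈ (liftR b).prePos := by simp [liftR]
  rw [h] at h1; simp [flipH] at h1

lemma liftH_ne_flipR (b : Act F) (MR : PModel F) : liftH b ≠ flipR MR := by
  intro h
  have h1 : LF.robotCanAct ∈ (flipR MR).prePos := by simp [flipR]
  rw [← h] at h1; simp [liftH] at h1

lemma liftR_ne_flipR (b : Act F) (MR : PModel F) : liftR b ≠ flipR MR := by
  intro h
  have h1 : LF.robotCanAct ∈ (flipR MR).delE := by simp [flipR]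
  rw [← h] at h1; simp [liftR] at h1

lemma flipH_ne_flipR (MH MR : PModel F) : flipH MH ≠ flipR MR := by
  intro h
  have h1 : LF.humanCanAct ∈ (flipH MH).delE := by simp [flipH]
  rw [h] at h1; simp [flipR] at h1

/-- No compare fluent in the add effects ⇒ not a check action. -/
lemma eq_of_chk_any {a : Act (LF F)} {g f : F} (ha : a.addE = {LF.compare g})
    (h : a = chk1 f ∨ a = chk2 f ∨ a = chk3 f ∨ a = chk4 f) : g = f := by
  rcases h with rfl | rfl | rfl | rfl <;>
    simpa [chk1, chk2, chk3, chk4] using ha.symm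

lemma not_chk_of_addE {a : Act (LF F)} (h : ∀ g : F, LF.compare g ∉ a.addE) (f : F) :
    ¬(a = chk1 f ∨ a = chk2 f ∨ a = chk3 f ∨ a = chk4 f) := by
  rintro (rfl | rfl | rfl | rfl) <;> exact h f (by simp [chk1, chk2, chk3, chk4])

lemma chk1_ne_chk3 (f g : F) : chk1 f ≠ chk3 g := by
  intro h
  have hfg : f = g := by
    have := congrArg Act.addE h
    simpa [chk1, chk3] using this
  subst hfg
  have h1 : LF.human f ∈ (chk3 f).prePos := by simp [chk3]
  rw [← h] at h1; simp [chk1] at h1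

lemma chk1_ne_chk4 (f g : F) : chk1 f ≠ chk4 g := by
  intro h
  have h1 : LF.robot f ∈ (chk1 f).prePos := by simp [chk1]
  rw [h] at h1; simp [chk4] at h1

lemma chk2_ne_chk3 (f g : F) : chk2 f ≠ chk3 g := by
  intro h
  have hfg : f = g := by
    have := congrArg Act.addE h
    simpa [chk2, chk3] using this
  subst hfg
  have h1 : LF.robot f ∈ (chk3 f).prePos := by simp [chk3]
  rw [← h] at h1; simp [chk2] at h1

lemma chk2_ne_chk4 (f g : F) : chk2 f ≠ chk4 g := by
  intro h
  have h1 : LF.human f ∈ (chk2 f).prePos := by simp [chk2]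
  rw [h] at h1; simp [chk4] at h1

/- part / count cons lemmas -/

lemma not_mem_humanImage {MH : PModel F} {a : Act (LF F)}
    (h : ∀ b : Act F, a ≠ liftH b) : a ∉ MH.actions.image liftH := by
  simp only [Finset.mem_image, not_exists]
  rintro b ⟨_, hb⟩
  exact h b hb.symm

lemma not_mem_robotImage {MR : PModel F} {a : Act (LF F)}
    (h : ∀ b : Act F, a ≠ liftR b) : a ∉ MR.actions.image liftR := by
  simp only [Finset.mem_image, not_exists]
  rintro b ⟨_, hb⟩
  exact h b hb.symm

lemma chk1_not_lift (f : F) : (∀ b : Act F, chk1 f ≠ liftH b) ∧ (∀ b : Act F, chk1 f ≠ liftR b) := by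
  constructor <;> intro b h <;>
  · have h1 : LF.compare f ∈ (chk1 f).addE := by simp [chk1]
    rw [h] at h1
    simp [liftH, liftR] at h1

lemma chk2_not_lift (f : F) : (∀ b : Act F, chk2 f ≠ liftH b) ∧ (∀ b : Act F, chk2 f ≠ liftR b) := by
  constructor <;> intro b h <;>
  · have h1 : LF.compare f ∈ (chk2 f).addE := by simp [chk2]
    rw [h] at h1
    simp [liftH, liftR] at h1

lemma chk3_not_lift (f : F) : (∀ b : Act F, chk3 f ≠ liftH b) ∧ (∀ b : Act F, chk3 f ≠ liftR b) := by
  constructor <;> intro b h <;>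
  · have h1 : LF.compare f ∈ (chk3 f).addE := by simp [chk3]
    rw [h] at h1
    simp [liftH, liftR] at h1

lemma chk4_not_lift (f : F) : (∀ b : Act F, chk4 f ≠ liftH b) ∧ (∀ b : Act F, chk4 f ≠ liftR b) := by
  constructor <;> intro b h <;>
  · have h1 : LF.compare f ∈ (chk4 f).addE := by simp [chk4]
    rw [h] at h1
    simp [liftH, liftR] at h1

lemma chk_ne_flipH {a : Act (LF F)} {f : F}
    (h : a = chk1 f ∨ a = chk2 f ∨ a = chk3 f ∨ a = chk4 f) (MH : PModel F) :
    a ≠ flipH MH := by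
  intro hEq
  have h1 : LF.robotCanAct ∈ a.addE := by rw [hEq]; simp [flipH]
  rcases h with rfl | rfl | rfl | rfl <;> simp [chk1, chk2, chk3, chk4] at h1

lemma chk_ne_flipR {a : Act (LF F)} {f : F}
    (h : a = chk1 f ∨ a = chk2 f ∨ a = chk3 f ∨ a = chk4 f) (MR : PModel F) :
    a ≠ flipR MR := by
  intro hEq
  have h1 : LF.compare f ∈ a.addE := by
    rcases h with rfl | rfl | rfl | rfl <;> simp [chk1, chk2, chk3, chk4]
  rw [hEq] at h1; simp [flipR] at h1

lemma humanPart_cons_pos (MH : PModel F) {a : Act (LF F)} (π : List (Act (LF F)))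
    (h : a ∈ MH.actions.image liftH) :
    humanPart MH (a :: π) = a :: humanPart MH π := by
  unfold humanPart
  rw [List.filter_cons_of_pos]
  simpa using h

lemma humanPart_cons_neg (MH : PModel F) {a : Act (LF F)} (π : List (Act (LF F)))
    (h : a ∉ MH.actions.image liftH) :
    humanPart MH (a :: π) = humanPart MH π := by
  unfold humanPart
  rw [List.filter_cons_of_neg]
  simpa using h

lemma robotPart_cons_pos (MR : PModel F) {a : Act (LF F)} (π : List (Act (LF F)))
    (h : a ∈ MR.actions.image liftR) :
    robotPart MR (a :: π) = a :: robotPart MR π := by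
  unfold robotPart
  rw [List.filter_cons_of_pos]
  simpa using h

lemma robotPart_cons_neg (MR : PModel F) {a : Act (LF F)} (π : List (Act (LF F)))
    (h : a ∉ MR.actions.image liftR) :
    robotPart MR (a :: π) = robotPart MR π := by
  unfold robotPart
  rw [List.filter_cons_of_neg]
  simpa using h

lemma countP_chk_cons_neg {a : Act (LF F)} (π : List (Act (LF F))) (f : F)
    (h : ¬(a = chk1 f ∨ a = chk2 f ∨ a = chk3 f ∨ a = chk4 f)) :
    (a :: π).countP (fun a => decide (a = chk1 f ∨ a = chk2 f ∨ a = chk3 f ∨ a = chk4 f)) =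
      π.countP (fun a => decide (a = chk1 f ∨ a = chk2 f ∨ a = chk3 f ∨ a = chk4 f)) := by
  rw [List.countP_cons_of_neg]
  simpa using h

lemma countP_chk_cons_pos {a : Act (LF F)} (π : List (Act (LF F))) (f : F)
    (h : a = chk1 f ∨ a = chk2 f ∨ a = chk3 f ∨ a = chk4 f) :
    (a :: π).countP (fun a => decide (a = chk1 f ∨ a = chk2 f ∨ a = chk3 f ∨ a = chk4 f)) =
      π.countP (fun a => decide (a = chk1 f ∨ a = chk2 f ∨ a = chk3 f ∨ a = chk4 f)) + 1 := by
  rw [List.countP_cons_of_pos]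
  simpa using h

lemma disCount_cons_neg (MR : PModel F) {a : Act (LF F)} (π : List (Act (LF F)))
    (h : ¬∃ f ∈ MR.fluents, a = chk1 f ∨ a = chk2 f) :
    disCount MR (a :: π) = disCount MR π := by
  unfold disCount
  rw [List.countP_cons_of_neg]
  simpa using h

lemma agrCount_cons_neg (MR : PModel F) {a : Act (LF F)} (π : List (Act (LF F)))
    (h : ¬∃ f ∈ MR.fluents, a = chk3 f ∨ a = chk4 f) :
    agrCount MR (a :: π) = agrCount MR π := by
  unfold agrCount
  rw [List.countP_cons_of_neg]
  simpa using h

lemma disCount_cons_pos (MR : PModel F) {a : Act (LF F)} (π : List (Act (LF F)))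
    (h : ∃ f ∈ MR.fluents, a = chk1 f ∨ a = chk2 f) :
    disCount MR (a :: π) = disCount MR π + 1 := by
  unfold disCount
  rw [List.countP_cons_of_pos]
  simpa using h

lemma agrCount_cons_pos (MR : PModel F) {a : Act (LF F)} (π : List (Act (LF F)))
    (h : ∃ f ∈ MR.fluents, a = chk3 f ∨ a = chk4 f) :
    agrCount MR (a :: π) = agrCount MR π + 1 := by
  unfold agrCount
  rw [List.countP_cons_of_pos]
  simpa using h

lemma notChk_of_noCompareAdd {a : Act (LF F)} (h : ∀ g : F, LF.compare g ∉ a.addE) :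
    (∀ (MR : PModel F), ¬∃ f ∈ MR.fluents, a = chk1 f ∨ a = chk2 f) ∧
    (∀ (MR : PModel F), ¬∃ f ∈ MR.fluents, a = chk3 f ∨ a = chk4 f) := by
  constructor <;> rintro MR ⟨f, _, (rfl | rfl)⟩ <;>
    exact h f (by simp [chk1, chk2, chk3, chk4])

lemma noCompare_liftH (b : Act F) : ∀ g : F, LF.compare g ∉ (liftH b).addE := by
  intro g; simp [liftH]

lemma noCompare_liftR (b : Act F) : ∀ g : F, LF.compare g ∉ (liftR b).addE := by
  intro g; simp [liftR]

lemma noCompare_flipH (MH : PModel F) : ∀ g : F, LF.compare g ∉ (flipH MH).addE := by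
  intro g; simp [flipH]

lemma noCompare_flipR (MR : PModel F) : ∀ g : F, LF.compare g ∉ (flipR MR).addE := by
  intro g; simp [flipR]

end CheckHelpers


section MainLemma
variable {F : Type} [DecidableEq F]

lemma runSeq_subset_fluents (M : PModel F) (hwf : WellFormed M) :
    ∀ (π : List (Act F)) (s : Finset F), s ⊆ M.fluents → ExecFrom M s π →
      runSeq s π ⊆ M.fluents := by
  intro π
  induction π with
  | nil => intro s hs _; exact hs
  | cons a π ih =>
    intro s hs hexec
    obtain ⟨ha, _, hrest⟩ := hexec
    refine ih (stepAct s a) ?_ hrest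
    intro f hf
    rcases Finset.mem_union.1 (Finset.mem_sdiff.1 hf).1 with h | h
    · exact hs h
    · exact ((hwf.2.2 a ha).2.2.1) h

lemma compiled_init (MR MH : PModel F) (c : Act (LF F) → ℕ) :
    (compiled MR MH c).init = mkS MR.init MH.init true false ∅ := by
  ext x; cases x <;> simp [compiled, mkS]

lemma mainLemma (MR MH : PModel F) (c : Act (LF F) → ℕ) :
    ∀ (π : List (Act (LF F))) (sR sH K : Finset F) (hq rq : Bool),
      K ⊆ MR.fluents →
      ExecFrom (compiled MR MH c) (mkS sR sH hq rq K) π →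
      ∃ (τH τR : List (Act F)) (K' : Finset F) (hq' rq' : Bool),
        ExecFrom MH sH τH ∧ ExecFrom MR sR τR ∧
        runSeq (mkS sR sH hq rq K) π = mkS (runSeq sR τR) (runSeq sH τH) hq' rq' K' ∧
        humanPart MH π = τH.map liftH ∧
        robotPart MR π = τR.map liftR ∧
        K ⊆ K' ∧ K' ⊆ MR.fluents ∧
        (∀ f : F, π.countP
          (fun a => decide (a = chk1 f ∨ a = chk2 f ∨ a = chk3 f ∨ a = chk4 f)) =
          if f ∈ K' \ K then 1 else 0) ∧
        disCount MR π + agrCount MR π = (K' \ K).card ∧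
        disCount MR π = ((K' \ K).filter
          (fun f => ¬(f ∈ runSeq sH τH ↔ f ∈ runSeq sR τR))).card ∧
        (hq = false → rq = false → τH = [] ∧ τR = []) := by
  intro π
  induction π with
  | nil =>
    intro sR sH K hq rq hK _
    exact ⟨[], [], K, hq, rq, trivial, trivial, rfl, rfl, rfl, subset_rfl, hK,
      by simp, by simp [disCount, agrCount], by simp [disCount], fun _ _ => ⟨rfl, rfl⟩⟩
  | cons a π ih =>
    intro sR sH K hq rq hK hexec
    obtain ⟨ha, hex, hrest⟩ := hexec
    simp only [compiled, Finset.mem_union, Finset.mem_image, Finset.mem_insert,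
      Finset.mem_singleton] at ha
    rcases ha with ((((((⟨b, hb, rfl⟩ | ⟨b, hb, rfl⟩) | (rfl | rfl)) |
      ⟨f, hf, rfl⟩) | ⟨f, hf, rfl⟩) | ⟨f, hf, rfl⟩) | ⟨f, hf, rfl⟩)
    · -- robot action
      obtain ⟨hrq, hexb⟩ := exec_liftR hex
      subst hrq
      rw [step_liftR] at hrest
      obtain ⟨τH, τR, K', hq', rq', ihH, ihR, hst, hHP, hRP, hKK, hKf, hcnt, hsum, hdis,
        hlast⟩ := ih _ _ _ _ _ hK hrest
      refine ⟨τH, b :: τR, K', hq', rq', ihH, ⟨hb, hexb, ihR⟩, ?_, ?_, ?_, hKK, hKf,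
        ?_, ?_, ?_, ?_⟩
      · simp only [runSeq]; rw [step_liftR]; exact hst
      · rw [humanPart_cons_neg _ _ (not_mem_humanImage (fun b' => liftR_ne_liftH b b'))]
        exact hHP
      · rw [robotPart_cons_pos _ _ (Finset.mem_image_of_mem liftR hb), hRP, List.map]
      · intro f
        rw [countP_chk_cons_neg _ _ (not_chk_of_addE (noCompare_liftR b) f)]
        exact hcnt f
      · rw [disCount_cons_neg _ _ ((notChk_of_noCompareAdd (noCompare_liftR b)).1 MR),
          agrCount_cons_neg _ _ ((notChk_of_noCompareAdd (noCompare_liftR b)).2 MR)]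
        exact hsum
      · rw [disCount_cons_neg _ _ ((notChk_of_noCompareAdd (noCompare_liftR b)).1 MR)]
        exact hdis
      · intro _ h; exact absurd h (by simp)
    · -- human action
      obtain ⟨hhq, hexb⟩ := exec_liftH hex
      subst hhq
      rw [step_liftH] at hrest
      obtain ⟨τH, τR, K', hq', rq', ihH, ihR, hst, hHP, hRP, hKK, hKf, hcnt, hsum, hdis,
        hlast⟩ := ih _ _ _ _ _ hK hrest
      refine ⟨b :: τH, τR, K', hq', rq', ⟨hb, hexb, ihH⟩, ihR, ?_, ?_, ?_, hKK, hKf,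
        ?_, ?_, ?_, ?_⟩
      · simp only [runSeq]; rw [step_liftH]; exact hst
      · rw [humanPart_cons_pos _ _ (Finset.mem_image_of_mem liftH hb), hHP, List.map]
      · rw [robotPart_cons_neg _ _ (not_mem_robotImage
          (fun b' h => liftR_ne_liftH b' b h.symm))]
        exact hRP
      · intro f
        rw [countP_chk_cons_neg _ _ (not_chk_of_addE (noCompare_liftH b) f)]
        exact hcnt f
      · rw [disCount_cons_neg _ _ ((notChk_of_noCompareAdd (noCompare_liftH b)).1 MR),
          agrCount_cons_neg _ _ ((notChk_of_noCompareAdd (noCompare_liftH b)).2 MR)]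
        exact hsum
      · rw [disCount_cons_neg _ _ ((notChk_of_noCompareAdd (noCompare_liftH b)).1 MR)]
        exact hdis
      · intro h; exact absurd h (by simp)
    · -- flipH
      have hhq := exec_flipH hex
      subst hhq
      rw [step_flipH] at hrest
      obtain ⟨τH, τR, K', hq', rq', ihH, ihR, hst, hHP, hRP, hKK, hKf, hcnt, hsum, hdis,
        hlast⟩ := ih _ _ _ _ _ hK hrest
      refine ⟨τH, τR, K', hq', rq', ihH, ihR, ?_, ?_, ?_, hKK, hKf, ?_, ?_, ?_, ?_⟩
      · simp only [runSeq]; rw [step_flipH]; exact hst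
      · rw [humanPart_cons_neg _ _ (not_mem_humanImage
          (fun b' h => liftH_ne_flipH b' MH h.symm))]
        exact hHP
      · rw [robotPart_cons_neg _ _ (not_mem_robotImage
          (fun b' h => liftR_ne_flipH b' MH h.symm))]
        exact hRP
      · intro f
        rw [countP_chk_cons_neg _ _ (not_chk_of_addE (noCompare_flipH MH) f)]
        exact hcnt f
      · rw [disCount_cons_neg _ _ ((notChk_of_noCompareAdd (noCompare_flipH MH)).1 MR),
          agrCount_cons_neg _ _ ((notChk_of_noCompareAdd (noCompare_flipH MH)).2 MR)]
        exact hsum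
      · rw [disCount_cons_neg _ _ ((notChk_of_noCompareAdd (noCompare_flipH MH)).1 MR)]
        exact hdis
      · intro h; exact absurd h (by simp)
    · -- flipR
      have hrq := exec_flipR hex
      subst hrq
      rw [step_flipR] at hrest
      obtain ⟨τH, τR, K', hq', rq', ihH, ihR, hst, hHP, hRP, hKK, hKf, hcnt, hsum, hdis,
        hlast⟩ := ih _ _ _ _ _ hK hrest
      refine ⟨τH, τR, K', hq', rq', ihH, ihR, ?_, ?_, ?_, hKK, hKf, ?_, ?_, ?_, ?_⟩
      · simp only [runSeq]; rw [step_flipR]; exact hst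
      · rw [humanPart_cons_neg _ _ (not_mem_humanImage
          (fun b' h => liftH_ne_flipR b' MR h.symm))]
        exact hHP
      · rw [robotPart_cons_neg _ _ (not_mem_robotImage
          (fun b' h => liftR_ne_flipR b' MR h.symm))]
        exact hRP
      · intro f
        rw [countP_chk_cons_neg _ _ (not_chk_of_addE (noCompare_flipR MR) f)]
        exact hcnt f
      · rw [disCount_cons_neg _ _ ((notChk_of_noCompareAdd (noCompare_flipR MR)).1 MR),
          agrCount_cons_neg _ _ ((notChk_of_noCompareAdd (noCompare_flipR MR)).2 MR)]
        exact hsum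
      · rw [disCount_cons_neg _ _ ((notChk_of_noCompareAdd (noCompare_flipR MR)).1 MR)]
        exact hdis
      · intro _ h; exact absurd h (by simp)
    · -- chk1
      obtain ⟨hfR, hfH, hhq, hrq, hfK⟩ := exec_chk1 hex
      subst hhq; subst hrq
      rw [step_chk1] at hrest
      obtain ⟨τH, τR, K', hq', rq', ihH, ihR, hst, hHP, hRP, hKK, hKf, hcnt, hsum, hdis,
        hlast⟩ := ih _ _ _ _ _ (Finset.insert_subset hf hK) hrest
      obtain ⟨rfl, rfl⟩ := hlast rfl rfl
      have hfK' : f ∈ K' := hKK (Finset.mem_insert_self f K)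
      have hsd : K' \ K = insert f (K' \ insert f K) := by
        ext g
        by_cases hg : g = f <;> simp [hg, hfK', hfK]
      have hchkSelf : chk1 f = chk1 f ∨ chk1 f = chk2 f ∨ chk1 f = chk3 f ∨ chk1 f = chk4 f :=
        Or.inl rfl
      refine ⟨[], [], K', hq', rq', trivial, trivial, ?_, ?_, ?_,
        (Finset.subset_insert f K).trans hKK, hKf, ?_, ?_, ?_, fun _ _ => ⟨rfl, rfl⟩⟩
      · simp only [runSeq]; rw [step_chk1]; exact hst
      · rw [humanPart_cons_neg _ _ (not_mem_humanImage (chk1_not_lift f).1)]; exact hHP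
      · rw [robotPart_cons_neg _ _ (not_mem_robotImage (chk1_not_lift f).2)]; exact hRP
      · intro g
        by_cases hg : g = f
        · subst hg
          rw [countP_chk_cons_pos π g (by simp), hcnt g, if_neg (by simp),
            if_pos (Finset.mem_sdiff.2 ⟨hfK', hfK⟩)]
        · rw [countP_chk_cons_neg _ _
            (fun h => hg (eq_of_chk_any (show (chk1 f).addE = {LF.compare f} from rfl) h).symm)]
          rw [hcnt g]
          exact if_congr (by simp [hg]) rfl rfl
      · rw [disCount_cons_pos _ _ ⟨f, hf, Or.inl rfl⟩,
          agrCount_cons_neg _ _ (by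
            rintro ⟨g, _, (h | h)⟩
            · exact chk1_ne_chk3 f g h
            · exact chk1_ne_chk4 f g h),
          hsd, Finset.card_insert_of_notMem (by simp)]
        omega
      · rw [disCount_cons_pos _ _ ⟨f, hf, Or.inl rfl⟩, hsd, Finset.filter_insert,
          if_pos (by simp [runSeq, hfR, hfH]), Finset.card_insert_of_notMem (by simp),
          hdis]
    · -- chk2
      obtain ⟨hfR, hfH, hhq, hrq, hfK⟩ := exec_chk2 hex
      subst hhq; subst hrq
      rw [step_chk2] at hrest
      obtain ⟨τH, τR, K', hq', rq', ihH, ihR, hst, hHP, hRP, hKK, hKf, hcnt, hsum, hdis,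
        hlast⟩ := ih _ _ _ _ _ (Finset.insert_subset hf hK) hrest
      obtain ⟨rfl, rfl⟩ := hlast rfl rfl
      have hfK' : f ∈ K' := hKK (Finset.mem_insert_self f K)
      have hsd : K' \ K = insert f (K' \ insert f K) := by
        ext g
        by_cases hg : g = f <;> simp [hg, hfK', hfK]
      refine ⟨[], [], K', hq', rq', trivial, trivial, ?_, ?_, ?_,
        (Finset.subset_insert f K).trans hKK, hKf, ?_, ?_, ?_, fun _ _ => ⟨rfl, rfl⟩⟩
      · simp only [runSeq]; rw [step_chk2]; exact hst
      · rw [humanPart_cons_neg _ _ (not_mem_humanImage (chk2_not_lift f).1)]; exact hHP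
      · rw [robotPart_cons_neg _ _ (not_mem_robotImage (chk2_not_lift f).2)]; exact hRP
      · intro g
        by_cases hg : g = f
        · subst hg
          rw [countP_chk_cons_pos π g (by simp), hcnt g, if_neg (by simp),
            if_pos (Finset.mem_sdiff.2 ⟨hfK', hfK⟩)]
        · rw [countP_chk_cons_neg _ _
            (fun h => hg (eq_of_chk_any (show (chk2 f).addE = {LF.compare f} from rfl) h).symm)]
          rw [hcnt g]
          exact if_congr (by simp [hg]) rfl rfl
      · rw [disCount_cons_pos _ _ ⟨f, hf, Or.inr rfl⟩,
          agrCount_cons_neg _ _ (by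
            rintro ⟨g, _, (h | h)⟩
            · exact chk2_ne_chk3 f g h
            · exact chk2_ne_chk4 f g h),
          hsd, Finset.card_insert_of_notMem (by simp)]
        omega
      · rw [disCount_cons_pos _ _ ⟨f, hf, Or.inr rfl⟩, hsd, Finset.filter_insert,
          if_pos (by simp [runSeq, hfR, hfH]), Finset.card_insert_of_notMem (by simp),
          hdis]
    · -- chk3
      obtain ⟨hfR, hfH, hhq, hrq, hfK⟩ := exec_chk3 hex
      subst hhq; subst hrq
      rw [step_chk3] at hrest
      obtain ⟨τH, τR, K', hq', rq', ihH, ihR, hst, hHP, hRP, hKK, hKf, hcnt, hsum, hdis,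
        hlast⟩ := ih _ _ _ _ _ (Finset.insert_subset hf hK) hrest
      obtain ⟨rfl, rfl⟩ := hlast rfl rfl
      have hfK' : f ∈ K' := hKK (Finset.mem_insert_self f K)
      have hsd : K' \ K = insert f (K' \ insert f K) := by
        ext g
        by_cases hg : g = f <;> simp [hg, hfK', hfK]
      refine ⟨[], [], K', hq', rq', trivial, trivial, ?_, ?_, ?_,
        (Finset.subset_insert f K).trans hKK, hKf, ?_, ?_, ?_, fun _ _ => ⟨rfl, rfl⟩⟩
      · simp only [runSeq]; rw [step_chk3]; exact hst
      · rw [humanPart_cons_neg _ _ (not_mem_humanImage (chk3_not_lift f).1)]; exact hHP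
      · rw [robotPart_cons_neg _ _ (not_mem_robotImage (chk3_not_lift f).2)]; exact hRP
      · intro g
        by_cases hg : g = f
        · subst hg
          rw [countP_chk_cons_pos π g (by simp), hcnt g, if_neg (by simp),
            if_pos (Finset.mem_sdiff.2 ⟨hfK', hfK⟩)]
        · rw [countP_chk_cons_neg _ _
            (fun h => hg (eq_of_chk_any (show (chk3 f).addE = {LF.compare f} from rfl) h).symm)]
          rw [hcnt g]
          exact if_congr (by simp [hg]) rfl rfl
      · rw [agrCount_cons_pos _ _ ⟨f, hf, Or.inl rfl⟩,
          disCount_cons_neg _ _ (by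
            rintro ⟨g, _, (h | h)⟩
            · exact chk1_ne_chk3 g f h.symm
            · exact chk2_ne_chk3 g f h.symm),
          hsd, Finset.card_insert_of_notMem (by simp)]
        omega
      · rw [disCount_cons_neg _ _ (by
            rintro ⟨g, _, (h | h)⟩
            · exact chk1_ne_chk3 g f h.symm
            · exact chk2_ne_chk3 g f h.symm),
          hsd, Finset.filter_insert, if_neg (by simp [runSeq, hfR, hfH]), hdis]
    · -- chk4
      obtain ⟨hfR, hfH, hhq, hrq, hfK⟩ := exec_chk4 hex
      subst hhq; subst hrq
      rw [step_chk4] at hrest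
      obtain ⟨τH, τR, K', hq', rq', ihH, ihR, hst, hHP, hRP, hKK, hKf, hcnt, hsum, hdis,
        hlast⟩ := ih _ _ _ _ _ (Finset.insert_subset hf hK) hrest
      obtain ⟨rfl, rfl⟩ := hlast rfl rfl
      have hfK' : f ∈ K' := hKK (Finset.mem_insert_self f K)
      have hsd : K' \ K = insert f (K' \ insert f K) := by
        ext g
        by_cases hg : g = f <;> simp [hg, hfK', hfK]
      refine ⟨[], [], K', hq', rq', trivial, trivial, ?_, ?_, ?_,
        (Finset.subset_insert f K).trans hKK, hKf, ?_, ?_, ?_, fun _ _ => ⟨rfl, rfl⟩⟩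
      · simp only [runSeq]; rw [step_chk4]; exact hst
      · rw [humanPart_cons_neg _ _ (not_mem_humanImage (chk4_not_lift f).1)]; exact hHP
      · rw [robotPart_cons_neg _ _ (not_mem_robotImage (chk4_not_lift f).2)]; exact hRP
      · intro g
        by_cases hg : g = f
        · subst hg
          rw [countP_chk_cons_pos π g (by simp), hcnt g, if_neg (by simp),
            if_pos (Finset.mem_sdiff.2 ⟨hfK', hfK⟩)]
        · rw [countP_chk_cons_neg _ _
            (fun h => hg (eq_of_chk_any (show (chk4 f).addE = {LF.compare f} from rfl) h).symm)]
          rw [hcnt g]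
          exact if_congr (by simp [hg]) rfl rfl
      · rw [agrCount_cons_pos _ _ ⟨f, hf, Or.inr rfl⟩,
          disCount_cons_neg _ _ (by
            rintro ⟨g, _, (h | h)⟩
            · exact chk1_ne_chk4 g f h.symm
            · exact chk2_ne_chk4 g f h.symm),
          hsd, Finset.card_insert_of_notMem (by simp)]
        omega
      · rw [disCount_cons_neg _ _ (by
            rintro ⟨g, _, (h | h)⟩
            · exact chk1_ne_chk4 g f h.symm
            · exact chk2_ne_chk4 g f h.symm),
          hsd, Finset.filter_insert, if_neg (by simp [runSeq, hfR, hfH]), hdis]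

end MainLemma

/-- in every valid plan `π^λ` of the compiled model `M^λ`, exactly one check
action from `{a^1_f, a^2_f, a^3_f, a^4_f}` occurs for each fluent `f ∈ F^R`, so
`|κ⁺(π^λ)| + |κ⁻(π^λ)| = |F^R|`; moreover `|κ⁻(π^λ)|` equals the size of the symmetric
difference of the final goal states reached in the human and robot copies (the check
actions do not modify those copies, so this is the state when the check phase begins), and
equivalently `|κ⁻(π^λ)| = |GSD(H(π^λ), M^H, R(π^λ), M^R)|`. -/
theorem compiled_check_counts {F : Type} [DecidableEq F]
    (MR MH : PModel F) (c : Act (LF F) → ℕ)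
    (hsh : MH.fluents = MR.fluents)
    (hwfR : WellFormed MR) (hwfH : WellFormed MH)
    (π : List (Act (LF F))) (hπ : IsPlan (compiled MR MH c) π) :
    (∀ f ∈ MR.fluents,
      π.countP (fun a => decide (a = chk1 f ∨ a = chk2 f ∨ a = chk3 f ∨ a = chk4 f)) = 1) ∧
    agrCount MR π + disCount MR π = MR.fluents.card ∧
    disCount MR π =
      (MR.fluents.filter (fun f =>
        ¬((LF.human f ∈ runSeq (compiled MR MH c).init π) ↔
          (LF.robot f ∈ runSeq (compiled MR MH c).init π)))).card ∧
    (∃ πH πR : List (Act F), IsPlan MH πH ∧ IsPlan MR πR ∧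
      humanPart MH π = πH.map liftH ∧ robotPart MR π = πR.map liftR ∧
      disCount MR π = (GSD MH MR πH πR).card) := by
  obtain ⟨hexec, hgoal⟩ := hπ
  have hexec' : ExecFrom (compiled MR MH c) (mkS MR.init MH.init true false ∅) π := by
    rw [← compiled_init MR MH c]; exact hexec
  obtain ⟨τH, τR, K', hq', rq', ihH, ihR, hst, hHP, hRP, _, hK'f, hcnt, hsum, hdis, _⟩ :=
    mainLemma MR MH c π MR.init MH.init ∅ true false (by simp) hexec'
  have hfinal : runSeq (compiled MR MH c).init π =
      mkS (runSeq MR.init τR) (runSeq MH.init τH) hq' rq' K' := by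
    rw [compiled_init MR MH c]; exact hst
  rw [hfinal] at hgoal
  have hGR : MR.goal ⊆ runSeq MR.init τR := by
    intro f hfin
    have := hgoal (show LF.robot f ∈ (compiled MR MH c).goal by
      simp only [compiled, Finset.mem_union, Finset.mem_image]
      exact Or.inl (Or.inl ⟨f, hfin, rfl⟩))
    simpa using this
  have hGH : MH.goal ⊆ runSeq MH.init τH := by
    intro f hfin
    have := hgoal (show LF.human f ∈ (compiled MR MH c).goal by
      simp only [compiled, Finset.mem_union, Finset.mem_image]
      exact Or.inl (Or.inr ⟨f, hfin, rfl⟩))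
    simpa using this
  have hK'eq : K' = MR.fluents := by
    refine subset_antisymm hK'f (fun f hf => ?_)
    have := hgoal (show LF.compare f ∈ (compiled MR MH c).goal by
      simp only [compiled, Finset.mem_union, Finset.mem_image]
      exact Or.inr ⟨f, hf, rfl⟩)
    simpa using this
  subst hK'eq
  rw [Finset.sdiff_empty] at hcnt hsum hdis
  have hsubH : runSeq MH.init τH ⊆ MR.fluents := by
    rw [← hsh]
    exact runSeq_subset_fluents MH hwfH τH MH.init hwfH.1 ihH
  have hsubR : runSeq MR.init τR ⊆ MR.fluents :=
    runSeq_subset_fluents MR hwfR τR MR.init hwfR.1 ihR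
  refine ⟨?_, ?_, ?_, τH, τR, ⟨ihH, hGH⟩, ⟨ihR, hGR⟩, hHP, hRP, ?_⟩
  · intro f hf
    rw [hcnt f, if_pos hf]
  · rw [Nat.add_comm]
    exact hsum
  · rw [hdis]
    congr 1
    refine Finset.filter_congr (fun f _ => ?_)
    rw [hfinal]
    simp
  · rw [hdis]
    congr 1
    ext f
    simp only [GSD, Finset.mem_union, Finset.mem_sdiff, Finset.mem_filter]
    constructor
    · rintro ⟨hf, h⟩
      tauto
    · rintro (⟨h1, h2⟩ | ⟨h1, h2⟩)
      · exact ⟨hsubH h1, by tauto⟩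
      · exact ⟨hsubR h1, by tauto⟩
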